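/- Let μ̃ > 0. For every integer l ≥ 0 there is a constant C = C(l, μ̃) such that for all 0 ≤ s < t, ( ∫_0^∞ | (z∂_z)^l ∂_z ( e^{-z²/(4μ̃(t-s))} ) |² dz )^{1/2} ≤ C (t-s)^{-1/4}. -/

import Mathlib

/-!
Writing `u = z²/a`, one has `z ∂_z u = 2u`, so `z ∂_z` maps `(z/a) e^{-u} P(u)` to
`(z/a) e^{-u} (P + 2u(P' - P))(u)`. Hence `(z∂_z)^l ∂_z e^{-z²/a} = (z/a) e^{-z²/a} P_l(z²/a)` with
polynomials `P_l` independent of `a`. Bounding `u P_l(u)² ≤ M e^u` for `u ≥ 0` dominates the square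
of the kernel by `(M/a) e^{-z²/a}`, whose integral over `(0, ∞)` is `M √π / (2 √a)`; then take
`a = 4μ̃(t - s)`.
-/

open MeasureTheory Real Set

noncomputable section

/-- The operator `g ↦ z ∂_z g`. -/
def Zd (g : ℝ → ℝ) : ℝ → ℝ := fun z => z * deriv g z

open Polynomial

theorem Polynomial.exists_abs_eval_le_mul_exp (p : ℝ[X]) :
    ∃ M > 0, ∀ u : ℝ, 0 ≤ u → |p.eval u| ≤ M * exp u := by
  set M := ∑ i ∈ Finset.range (p.natDegree + 1), |p.coeff i| * i.factorial
  refine ⟨M + 1, by positivity, fun u hu => ?_⟩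
  have pow_le (i : ℕ) : u ^ i ≤ i.factorial * exp u := by
    have := pow_div_factorial_le_exp u hu i
    rwa [div_le_iff₀ (by positivity), mul_comm] at this
  calc |p.eval u| ≤ ∑ i ∈ Finset.range (p.natDegree + 1), |p.coeff i| * u ^ i := by
        rw [eval_eq_sum_range]
        refine (Finset.abs_sum_le_sum_abs _ _).trans_eq (Finset.sum_congr rfl fun i _ => ?_)
        rw [abs_mul, abs_pow, abs_of_nonneg hu]
    _ ≤ ∑ i ∈ Finset.range (p.natDegree + 1), |p.coeff i| * (i.factorial * exp u) :=
        Finset.sum_le_sum fun i _ => mul_le_mul_of_nonneg_left (pow_le i) (abs_nonneg _)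
    _ = M * exp u := by simp only [M, Finset.sum_mul, mul_assoc]
    _ ≤ (M + 1) * exp u := by gcongr; linarith

def heatKernelPoly : ℕ → ℝ[X]
  | 0 => C (-2)
  | l + 1 => heatKernelPoly l + 2 * X * (derivative (heatKernelPoly l) - heatKernelPoly l)

def gaussianProfile (a : ℝ) (p : ℝ[X]) (z : ℝ) : ℝ :=
  z / a * exp (-(z ^ 2) / a) * p.eval (z ^ 2 / a)

theorem hasDerivAt_exp_neg_sq_div (a z : ℝ) :
    HasDerivAt (fun w => exp (-(w ^ 2) / a)) (exp (-(z ^ 2) / a) * (-(2 * z) / a)) z := by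
  simpa using ((hasDerivAt_pow 2 z).neg.div_const a).exp

theorem deriv_exp_neg_sq_div (a : ℝ) :
    deriv (fun w => exp (-(w ^ 2) / a)) = gaussianProfile a (heatKernelPoly 0) := by
  ext z
  rw [(hasDerivAt_exp_neg_sq_div a z).deriv, gaussianProfile, heatKernelPoly, eval_C]
  ring

theorem Zd_gaussianProfile {a : ℝ} (ha : a ≠ 0) (p : ℝ[X]) :
    Zd (gaussianProfile a p) = gaussianProfile a (p + 2 * X * (derivative p - p)) := by
  ext z
  have hsq : HasDerivAt (fun z => z ^ 2 / a) (2 * z / a) z := by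
    simpa using (hasDerivAt_pow 2 z).div_const a
  have h : HasDerivAt (gaussianProfile a p) _ z :=
    (((hasDerivAt_id z).div_const a).mul (hasDerivAt_exp_neg_sq_div a z)).mul
      ((p.hasDerivAt _).comp z hsq)
  rw [Zd, h.deriv, gaussianProfile]
  simp only [Pi.mul_apply, id, eval_add, eval_mul, eval_sub, eval_X, eval_ofNat]
  field_simp
  ring

theorem iterate_Zd_deriv_exp_neg_sq_div {a : ℝ} (ha : a ≠ 0) (l : ℕ) :
    Zd^[l] (deriv fun w => exp (-(w ^ 2) / a)) = gaussianProfile a (heatKernelPoly l) := by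
  induction l with
  | zero => exact deriv_exp_neg_sq_div a
  | succ l ih => rw [Function.iterate_succ_apply', ih, Zd_gaussianProfile ha, heatKernelPoly]

section GaussianProfileBounds

variable {a : ℝ} {p : ℝ[X]} {M : ℝ}

theorem sq_gaussianProfile_le (ha : 0 < a)
    (hM : ∀ u : ℝ, 0 ≤ u → |(X * p ^ 2).eval u| ≤ M * exp u) (z : ℝ) :
    gaussianProfile a p z ^ 2 ≤ M / a * exp (-(z ^ 2) / a) := by
  set u := z ^ 2 / a
  have hu : 0 ≤ u := by positivity
  have hexp : exp (-(z ^ 2) / a) = exp (-u) := by rw [neg_div]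
  calc gaussianProfile a p z ^ 2
      = (X * p ^ 2).eval u / a * exp (-u) ^ 2 := by
        simp only [gaussianProfile, hexp, eval_mul, eval_pow, eval_X, u]
        field_simp
    _ ≤ M * exp u / a * exp (-u) ^ 2 := by
        gcongr
        exact (le_abs_self _).trans (hM u hu)
    _ = M / a * exp (-(z ^ 2) / a) := by
        rw [hexp, sq, mul_div_right_comm, mul_assoc, ← exp_add, ← exp_add]
        ring_nf

theorem integral_sq_gaussianProfile_le (ha : 0 < a)
    (hM : ∀ u : ℝ, 0 ≤ u → |(X * p ^ 2).eval u| ≤ M * exp u) :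
    ∫ z in Ioi (0 : ℝ), gaussianProfile a p z ^ 2
      ≤ M * √π / 2 * a ^ (-(1 / 2) : ℝ) := by
  have hgauss (z : ℝ) : exp (-(z ^ 2) / a) = exp (-(1 / a) * z ^ 2) := by ring_nf
  calc ∫ z in Ioi (0 : ℝ), gaussianProfile a p z ^ 2
      ≤ ∫ z in Ioi (0 : ℝ), M / a * exp (-(1 / a) * z ^ 2) := by
        refine integral_mono_of_nonneg (.of_forall fun z => sq_nonneg _)
          ((integrable_exp_neg_mul_sq (by positivity)).integrableOn.const_mul _)
          (.of_forall fun z => ?_)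
        simpa only [hgauss] using sq_gaussianProfile_le ha hM z
    _ = M * √π / 2 * a ^ (-(1 / 2) : ℝ) := by
        rw [integral_const_mul, integral_gaussian_Ioi, div_div_eq_mul_div, div_one,
          sqrt_mul pi_pos.le, rpow_neg ha.le, ← sqrt_eq_rpow]
        field_simp
        rw [sq_sqrt ha.le]

end GaussianProfileBounds

theorem exists_L2_norm_iterate_Zd_deriv_exp_neg_sq_div_le (l : ℕ) :
    ∃ K > 0, ∀ a > 0,
      (∫ z in Ioi (0 : ℝ), (Zd^[l] (deriv fun w => exp (-(w ^ 2) / a)) z) ^ 2) ^ (1 / 2 : ℝ)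
        ≤ K * a ^ (-(1 / 4) : ℝ) := by
  obtain ⟨M, hM, hMbound⟩ := (X * heatKernelPoly l ^ 2).exists_abs_eval_le_mul_exp
  refine ⟨(M * √π / 2) ^ (1 / 2 : ℝ), by positivity, fun a ha => ?_⟩
  rw [iterate_Zd_deriv_exp_neg_sq_div ha.ne']
  calc _ ≤ (M * √π / 2 * a ^ (-(1 / 2) : ℝ)) ^ (1 / 2 : ℝ) :=
        rpow_le_rpow (integral_nonneg fun z => sq_nonneg _)
          (integral_sq_gaussianProfile_le ha hMbound) (by norm_num)
    _ = (M * √π / 2) ^ (1 / 2 : ℝ) * a ^ (-(1 / 4) : ℝ) := by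
        rw [mul_rpow (by positivity) (by positivity), ← rpow_mul ha.le]
        norm_num

/-- Let `μ̃ > 0`.  For every integer `l ≥ 0` there is a constant
`C = C(l, μ̃)` such that for all `0 ≤ s < t`,
`‖(z∂_z)^l ∂_z (e^{-z²/(4μ̃(t-s))})‖_{L²(0,∞)} ≤ C (t-s)^{-1/4}`. -/
theorem heat_kernel_L2_bound (μ : ℝ) (hμ : 0 < μ) (l : ℕ) :
    ∃ C > 0, ∀ s t : ℝ, 0 ≤ s → s < t →
      (∫ z in Ioi (0 : ℝ),
          (Zd^[l] (deriv fun w => Real.exp (-(w ^ 2) / (4 * μ * (t - s)))) z) ^ 2)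
          ^ (1 / 2 : ℝ)
        ≤ C * (t - s) ^ (-(1 / 4) : ℝ) := by
  obtain ⟨K, hK, hbound⟩ := exists_L2_norm_iterate_Zd_deriv_exp_neg_sq_div_le l
  refine ⟨K * (4 * μ) ^ (-(1 / 4) : ℝ), by positivity, fun s t _ hst => ?_⟩
  have hts : 0 < t - s := sub_pos.mpr hst
  have := hbound (4 * μ * (t - s)) (by positivity)
  rwa [mul_rpow (by positivity) hts.le, ← mul_assoc] at this

end
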